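/- Let n ≥ 1, k ≥ 0, l ≥ 0 be integers, m ∈ ℤ, s ∈ ℂ, and let h : ℝⁿ → ℂ be a harmonic polynomial homogeneous of degree k. Then for all θ ∈ ℝ and y ∈ ℝⁿ, (η⁻ F_{m,l,k}[h])(θ,y) = −((−m+4l+2k+n)/4) · F_{m−4,l,k}[h](θ,y). -/

import Mathlib

noncomputable section

/-- `n`-dimensional Euclidean space. -/
abbrev E (n : ℕ) := EuclideanSpace ℝ (Fin n)

/-- Partial derivative in the `j`-th coordinate direction. -/
noncomputable def pd {n : ℕ} (j : Fin n) (f : E n → ℂ) (y : E n) : ℂ :=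
  fderiv ℝ f y (EuclideanSpace.single j 1)

/-- The Laplacian `Δ = ∑ⱼ ∂²/∂yⱼ²`. -/
noncomputable def lap {n : ℕ} (f : E n → ℂ) (y : E n) : ℂ :=
  ∑ j : Fin n, pd j (pd j f) y

/-- `h : ℝⁿ → ℂ` is a harmonic polynomial, homogeneous of degree `k`:
it is given by a polynomial in the coordinates, `h (t • y) = t^k * h y`,
and `Δ h = 0`. -/
def IsHarmonicHomog {n : ℕ} (k : ℕ) (h : E n → ℂ) : Prop :=
  (∃ p : MvPolynomial (Fin n) ℂ, ∀ y : E n, h y = MvPolynomial.eval (fun j => ((y j : ℝ) : ℂ)) p) ∧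
  (∀ (t : ℝ) (y : E n), h (t • y) = (t : ℂ) ^ k * h y) ∧
  (∀ y : E n, lap h y = 0)

/-- Confluent hypergeometric function of the first kind
`₁F₁(a,b,z) = ∑ⱼ (a)ⱼ/(b)ⱼ · zʲ/j!`. -/
noncomputable def oneF1 (a b z : ℂ) : ℂ :=
  ∑' j : ℕ, ((ascPochhammer ℂ j).eval a / (ascPochhammer ℂ j).eval b) * z ^ j / (j.factorial : ℂ)

/-- The `K`-finite vector
`F_{m,l,k}[h](θ,y) = e^{-imθ/2} e^{-is‖y‖²} ‖y‖^{2l} h(y) ₁F₁((m+4l+2k+n)/4, 2l+k+n/2, 2is‖y‖²)`. -/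
noncomputable def Fm (n : ℕ) (s : ℂ) (m : ℤ) (l : ℕ) (k : ℤ) (h : E n → ℂ)
    (θ : ℝ) (y : E n) : ℂ :=
  Complex.exp (-Complex.I * (m : ℂ) * (θ : ℂ) / 2) *
    Complex.exp (-Complex.I * s * ((‖y‖ : ℝ) : ℂ) ^ 2) * ((‖y‖ : ℝ) : ℂ) ^ (2 * l) * h y *
    oneF1 (((m : ℂ) + 4 * (l : ℂ) + 2 * (k : ℂ) + (n : ℂ)) / 4)
      (2 * (l : ℂ) + (k : ℂ) + (n : ℂ) / 2)
      (2 * Complex.I * s * ((‖y‖ : ℝ) : ℂ) ^ 2)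


/-!
Write `F_{m,l,k}[h](θ, y) = e^{-imθ/2} G(y)`, so that `∂_θ` acts by `-im/2`. Since `h` is
homogeneous of degree `k`, the Euler operator `∑ yⱼ ∂ⱼ` is the derivative of `t ↦ G(t y)` at
`t = 1`; with `M = ₁F₁(a, b, ·)`, `z = 2is‖y‖²` and `a`, `b` the parameters of `F_{m,l,k}`, this
turns `η⁻F` into `e^{2iθ} e^{-imθ/2} e^{-is‖y‖²} ‖y‖^{2l} h(y) ((a - b + z) M(z) - z M'(z))`.
Kummer's contiguous relation `(a - b + z) M(z) - z M'(z) = (a - b) ₁F₁(a - 1, b, z)`, checked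
coefficientwise, finishes the proof: `a - b = -(-m+4l+2k+n)/4`, and `a - 1` is the first parameter
of `F_{m-4,l,k}`. For `Re b > 0` the coefficients of `M` are `O(Kʲ/j!)`, which justifies the
termwise differentiation.
-/
open Nat Complex

section FactorialDecay

variable {c : ℕ → ℂ} {K : ℝ}

theorem summable_norm_mul_succ_mul_pow (hc : ∀ j, ‖c j‖ ≤ K ^ j / j !) {R : ℝ} (hR : 0 ≤ R) :
    Summable fun j : ℕ => ‖c j‖ * ((j + 1) * R ^ j) := by
  have hK : 0 ≤ K := by simpa using (norm_nonneg _).trans (hc 1)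
  refine .of_nonneg_of_le (fun j => by positivity) (fun j => ?_)
    (Real.summable_pow_div_factorial (2 * K * R))
  have hj : (j : ℝ) + 1 ≤ 2 ^ j := by exact_mod_cast Nat.lt_two_pow_self
  calc ‖c j‖ * ((j + 1) * R ^ j) ≤ K ^ j / j ! * (2 ^ j * R ^ j) := by gcongr; exact hc j
    _ = (2 * K * R) ^ j / j ! := by ring

theorem summable_mul_pow (hc : ∀ j, ‖c j‖ ≤ K ^ j / j !) (z : ℂ) :
    Summable fun j => c j * z ^ j :=
  .of_norm_bounded (summable_norm_mul_succ_mul_pow hc (norm_nonneg z)) fun j => by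
    rw [norm_mul, norm_pow]
    exact mul_le_mul_of_nonneg_left
      (le_mul_of_one_le_left (by positivity) (le_add_of_nonneg_left j.cast_nonneg)) (norm_nonneg _)

theorem summable_mul_natCast_mul_pow (hc : ∀ j, ‖c j‖ ≤ K ^ j / j !) (z : ℂ) :
    Summable fun j => c j * (j * z ^ j) :=
  .of_norm_bounded (summable_norm_mul_succ_mul_pow hc (norm_nonneg z)) fun j => by
    rw [norm_mul, norm_mul, norm_pow, Complex.norm_natCast]
    gcongr
    linarith

theorem hasDerivAt_tsum_mul_pow (hc : ∀ j, ‖c j‖ ≤ K ^ j / j !) (z : ℂ) :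
    HasDerivAt (fun w => ∑' j, c j * w ^ j) (∑' j, c j * (j * z ^ (j - 1))) z := by
  have hR : 1 ≤ ‖z‖ + 1 := by simp
  refine hasDerivAt_tsum_of_isPreconnected
    (summable_norm_mul_succ_mul_pow hc (R := ‖z‖ + 1) (by linarith))
    Metric.isOpen_ball (convex_ball (0 : ℂ) (‖z‖ + 1)).isPreconnected
    (fun j w _ => (hasDerivAt_pow j w).const_mul (c j)) (fun j w hw => ?_)
    (Metric.mem_ball_self (by linarith)) (summable_mul_pow hc 0) (by simp)
  have hw : ‖w‖ ≤ ‖z‖ + 1 := (mem_ball_zero_iff.mp hw).le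
  rw [norm_mul, norm_mul, Complex.norm_natCast, norm_pow]
  refine mul_le_mul_of_nonneg_left (mul_le_mul (by linarith) ?_ (by positivity) (by positivity))
    (norm_nonneg _)
  calc ‖w‖ ^ (j - 1) ≤ (‖z‖ + 1) ^ (j - 1) := by gcongr
    _ ≤ (‖z‖ + 1) ^ j := pow_le_pow_right₀ hR (Nat.sub_le j 1)

end FactorialDecay

section Pochhammer

theorem norm_ascPochhammer_eval_le (a : ℂ) (j : ℕ) :
    ‖(ascPochhammer ℂ j).eval a‖ ≤ (‖a‖ + 1) ^ j * j ! := by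
  induction j with
  | zero => simp
  | succ j ih =>
    have h : ‖a + j‖ ≤ (‖a‖ + 1) * (j + 1) := by
      refine (norm_add_le _ _).trans ?_
      rw [Complex.norm_natCast]
      nlinarith [norm_nonneg a, (j.cast_nonneg : (0 : ℝ) ≤ j)]
    rw [ascPochhammer_succ_eval, norm_mul, factorial_succ, pow_succ]
    push_cast
    calc _ ≤ (‖a‖ + 1) ^ j * j ! * ((‖a‖ + 1) * (j + 1)) := by gcongr
      _ = _ := by ring

theorem pow_mul_factorial_le_norm_ascPochhammer_eval {b : ℂ} (hb : 0 < b.re) (j : ℕ) :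
    min b.re 1 ^ j * j ! ≤ ‖(ascPochhammer ℂ j).eval b‖ := by
  induction j with
  | zero => simp
  | succ j ih =>
    have h : min b.re 1 * (j + 1) ≤ ‖b + j‖ := by
      refine le_trans ?_ (Complex.re_le_norm _)
      have := min_le_left b.re 1
      have := min_le_right b.re 1
      simp only [add_re, natCast_re]
      nlinarith [(j.cast_nonneg : (0 : ℝ) ≤ j)]
    rw [ascPochhammer_succ_eval, norm_mul, factorial_succ, pow_succ]
    push_cast
    calc _ = min b.re 1 ^ j * j ! * (min b.re 1 * (j + 1)) := by ring
      _ ≤ _ := by gcongr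

theorem norm_ascPochhammer_eval_pos {b : ℂ} (hb : 0 < b.re) (j : ℕ) :
    0 < ‖(ascPochhammer ℂ j).eval b‖ :=
  lt_of_lt_of_le (by positivity) (pow_mul_factorial_le_norm_ascPochhammer_eval hb j)

end Pochhammer

section ConfluentHypergeometric

def hypCoeff (a b : ℂ) (j : ℕ) : ℂ :=
  (ascPochhammer ℂ j).eval a / ((ascPochhammer ℂ j).eval b * j !)

theorem oneF1_eq_tsum (a b z : ℂ) : oneF1 a b z = ∑' j, hypCoeff a b j * z ^ j :=
  tsum_congr fun j => by rw [hypCoeff]; ring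

theorem norm_hypCoeff_le (a : ℂ) {b : ℂ} (hb : 0 < b.re) (j : ℕ) :
    ‖hypCoeff a b j‖ ≤ ((‖a‖ + 1) / min b.re 1) ^ j / j ! := by
  have hδ : 0 < min b.re 1 := lt_min hb one_pos
  rw [hypCoeff, norm_div, norm_mul, norm_natCast]
  calc _ ≤ (‖a‖ + 1) ^ j * j ! / (min b.re 1 ^ j * j ! * j !) := by
        gcongr
        · exact norm_ascPochhammer_eval_le a j
        · exact pow_mul_factorial_le_norm_ascPochhammer_eval hb j
    _ = _ := by rw [div_pow]; field_simp

theorem hypCoeff_zero (a b : ℂ) : hypCoeff a b 0 = 1 := by simp [hypCoeff]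

theorem hypCoeff_succ_contiguous (a : ℂ) {b : ℂ} (j : ℕ)
    (hb : (ascPochhammer ℂ (j + 1)).eval b ≠ 0) :
    (a - b) * (hypCoeff (a - 1) b (j + 1) - hypCoeff a b (j + 1)) + (j + 1) * hypCoeff a b (j + 1)
      = hypCoeff a b j := by
  have hpred : (ascPochhammer ℂ (j + 1)).eval (a - 1) = (a - 1) * (ascPochhammer ℂ j).eval a := by
    rw [ascPochhammer_succ_left, Polynomial.eval_mul, Polynomial.eval_X, Polynomial.eval_comp]
    simp
  rw [ascPochhammer_succ_eval, mul_ne_zero_iff] at hb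
  simp only [hypCoeff, hpred, ascPochhammer_succ_eval, factorial_succ]
  push_cast
  field_simp [hb.1, hb.2]
  ring

theorem hasDerivAt_oneF1 (a : ℂ) {b : ℂ} (hb : 0 < b.re) (z : ℂ) :
    HasDerivAt (oneF1 a b) (∑' j, hypCoeff a b j * (j * z ^ (j - 1))) z := by
  simp_rw [funext (oneF1_eq_tsum a b)]
  exact hasDerivAt_tsum_mul_pow (norm_hypCoeff_le a hb) z

theorem oneF1_contiguous (a : ℂ) {b : ℂ} (hb : 0 < b.re) (z : ℂ) :
    (a - b + z) * oneF1 a b z - z * deriv (oneF1 a b) z = (a - b) * oneF1 (a - 1) b z := by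
  have hc := norm_hypCoeff_le a hb
  have hM : HasSum (fun j => hypCoeff a b j * z ^ j) (oneF1 a b z) := by
    rw [oneF1_eq_tsum]; exact (summable_mul_pow hc z).hasSum
  have hM₁ : HasSum (fun j => hypCoeff (a - 1) b j * z ^ j) (oneF1 (a - 1) b z) := by
    rw [oneF1_eq_tsum]; exact (summable_mul_pow (norm_hypCoeff_le (a - 1) hb) z).hasSum
  have hzM' : HasSum (fun j => hypCoeff a b j * (j * z ^ j)) (z * deriv (oneF1 a b) z) := by
    rw [(hasDerivAt_oneF1 a hb z).deriv, ← tsum_mul_left]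
    convert (summable_mul_natCast_mul_pow hc z).hasSum using 1
    refine tsum_congr fun j => ?_
    rcases j with _ | j
    · simp
    · simp only [Nat.add_sub_cancel, pow_succ]; ring
  have hsum := ((hM₁.sub hM).mul_left (a - b)).add hzM'
  rw [← hasSum_nat_add_iff' 1] at hsum
  have hshift : HasSum (fun j => hypCoeff a b j * z ^ (j + 1)) (z * oneF1 a b z) :=
    (hM.mul_left z).congr_fun fun j => by ring
  have heq := hsum.unique (hshift.congr_fun fun j => ?_)
  · simp only [Finset.sum_range_one, hypCoeff_zero, pow_zero, mul_one, sub_self, mul_zero,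
      CharP.cast_eq_zero, add_zero, sub_zero] at heq
    linear_combination -heq
  · rw [← hypCoeff_succ_contiguous a j (norm_pos_iff.mp (norm_ascPochhammer_eval_pos hb _))]
    push_cast
    ring

end ConfluentHypergeometric

theorem MvPolynomial.differentiable_eval_comp {σ F : Type*} [NormedAddCommGroup F]
    [NormedSpace ℝ F] (p : MvPolynomial σ ℂ) {f : σ → F → ℂ} (hf : ∀ j, Differentiable ℝ (f j)) :
    Differentiable ℝ fun x => MvPolynomial.eval (fun j => f j x) p := by
  induction p using MvPolynomial.induction_on with
  | C a => simp only [MvPolynomial.eval_C]; exact differentiable_const a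
  | add p q hp hq => simp only [MvPolynomial.eval_add]; exact hp.add hq
  | mul_X p j hp => simp only [MvPolynomial.eval_mul, MvPolynomial.eval_X]; exact hp.mul (hf j)

theorem differentiable_ofReal_norm_sq {F : Type*} [NormedAddCommGroup F] [InnerProductSpace ℝ F] :
    Differentiable ℝ fun y : F => ((‖y‖ : ℝ) : ℂ) ^ 2 := by
  simp_rw [← ofReal_pow]
  exact ofRealCLM.differentiable.comp
    ((differentiable_id : Differentiable ℝ (id : F → F)).norm_sq ℝ)

theorem IsHarmonicHomog.differentiable {n k : ℕ} {h : E n → ℂ} (hh : IsHarmonicHomog k h) :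
    Differentiable ℝ h := by
  obtain ⟨⟨p, hp⟩, -, -⟩ := hh
  rw [funext hp]
  exact p.differentiable_eval_comp fun j =>
    ofRealCLM.differentiable.comp (EuclideanSpace.proj (𝕜 := ℝ) j).differentiable

section EulerOperator

variable {n : ℕ}

theorem sum_coord_mul_pd (f : E n → ℂ) (y : E n) :
    ∑ j, ((y j : ℝ) : ℂ) * pd j f y = fderiv ℝ f y y := by
  have hy : ∑ j, y j • EuclideanSpace.single j (1 : ℝ) = y := by
    simpa using (EuclideanSpace.basisFun (Fin n) ℝ).sum_repr y
  conv_rhs => rw [← congrArg (fderiv ℝ f y) hy]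
  simp [pd, map_sum, Complex.real_smul]

theorem sum_coord_mul_pd_eq_of_hasDerivAt {f : E n → ℂ} {y : E n} {f' : ℂ}
    (hf : DifferentiableAt ℝ f y) (h : HasDerivAt (fun t : ℝ => f (t • y)) f' 1) :
    ∑ j, ((y j : ℝ) : ℂ) * pd j f y = f' := by
  have hray : HasDerivAt (fun t : ℝ => t • y) y 1 := by
    simpa using (hasDerivAt_id (1 : ℝ)).smul_const y
  rw [← one_smul ℝ y] at hf
  rw [sum_coord_mul_pd]
  simpa using (hf.hasFDerivAt.comp_hasDerivAt 1 hray).unique h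

end EulerOperator

section RadialProfile

variable {n : ℕ} {s : ℂ} {l : ℕ} {h : E n → ℂ} {g : ℂ → ℂ}

variable (s l h g) in
def radialProfile (y : E n) : ℂ :=
  exp (-I * s * ((‖y‖ : ℝ) : ℂ) ^ 2) * ((‖y‖ : ℝ) : ℂ) ^ (2 * l) * h y *
    g (2 * I * s * ((‖y‖ : ℝ) : ℂ) ^ 2)

theorem differentiableAt_radialProfile {y : E n} (hh : DifferentiableAt ℝ h y)
    (hg : DifferentiableAt ℂ g (2 * I * s * ((‖y‖ : ℝ) : ℂ) ^ 2)) :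
    DifferentiableAt ℝ (radialProfile s l h g) y := by
  have hq := differentiable_ofReal_norm_sq (F := E n) y
  unfold radialProfile
  simp_rw [pow_mul]
  exact (((hq.const_mul _).cexp.mul (hq.pow l)).mul hh).mul
    ((hg.restrictScalars ℝ).comp y (hq.const_mul _))

theorem radialProfile_smul {k : ℕ} {y : E n} {t : ℝ} (hhom : h (t • y) = t ^ k * h y) :
    radialProfile s l h g (t • y) = (t : ℂ) ^ (2 * l + k) * (((‖y‖ : ℝ) : ℂ) ^ (2 * l) * h y) *
      (exp (-I * s * ((t : ℂ) ^ 2 * ((‖y‖ : ℝ) : ℂ) ^ 2)) *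
        g (2 * I * s * ((t : ℂ) ^ 2 * ((‖y‖ : ℝ) : ℂ) ^ 2))) := by
  have habs : ((|t| : ℝ) : ℂ) ^ 2 = (t : ℂ) ^ 2 := by rw [← ofReal_pow, sq_abs, ofReal_pow]
  rw [radialProfile, hhom, norm_smul, Real.norm_eq_abs, ofReal_mul, mul_pow, habs, pow_mul,
    mul_pow, habs]
  ring

theorem hasDerivAt_radialProfile_smul {k : ℕ} {y : E n} {g' : ℂ}
    (hhom : ∀ t : ℝ, h (t • y) = t ^ k * h y)
    (hg : HasDerivAt g g' (2 * I * s * ((‖y‖ : ℝ) : ℂ) ^ 2)) :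
    HasDerivAt (fun t : ℝ => radialProfile s l h g (t • y))
      (((2 * l + k - 2 * I * s * ((‖y‖ : ℝ) : ℂ) ^ 2) * g (2 * I * s * ((‖y‖ : ℝ) : ℂ) ^ 2)
          + 2 * (2 * I * s * ((‖y‖ : ℝ) : ℂ) ^ 2) * g') *
        (exp (-I * s * ((‖y‖ : ℝ) : ℂ) ^ 2) * ((‖y‖ : ℝ) : ℂ) ^ (2 * l) * h y)) 1 := by
  set ρ : ℂ := ((‖y‖ : ℝ) : ℂ) ^ 2
  simp_rw [radialProfile_smul (hhom _)]
  have ht : HasDerivAt (fun t : ℝ => (t : ℂ)) 1 1 := by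
    simpa using (hasDerivAt_id (1 : ℝ)).ofReal_comp
  have hsq : HasDerivAt (fun t : ℝ => (t : ℂ) ^ 2) 2 1 := by simpa using ht.fun_pow 2
  have hpow : HasDerivAt (fun t : ℝ => (t : ℂ) ^ (2 * l + k)) (2 * l + k) 1 := by
    simpa using ht.fun_pow (2 * l + k)
  have hexp := ((hsq.mul_const ρ).const_mul (-I * s)).cexp
  have hg' : HasDerivAt (fun t : ℝ => g (2 * I * s * ((t : ℂ) ^ 2 * ρ)))
      (g' * (2 * I * s * (2 * ρ))) 1 :=
    hg.comp_of_eq 1 ((hsq.mul_const ρ).const_mul (2 * I * s)) (by simp)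
  refine ((hpow.mul_const (((‖y‖ : ℝ) : ℂ) ^ (2 * l) * h y)).fun_mul
    (hexp.fun_mul hg')).congr_deriv ?_
  simp only [ofReal_one, one_pow, one_mul]
  ring

end RadialProfile

theorem Fm_eq_exp_mul_radialProfile (n : ℕ) (s : ℂ) (m : ℤ) (l : ℕ) (k : ℤ) (h : E n → ℂ)
    (θ : ℝ) (y : E n) :
    Fm n s m l k h θ y = exp (-I * m * θ / 2) * radialProfile s l h
      (oneF1 ((m + 4 * (l : ℂ) + 2 * k + n) / 4) (2 * (l : ℂ) + k + n / 2)) y := by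
  rw [Fm, radialProfile]
  ring

theorem hasDerivAt_Fm_angle (n : ℕ) (s : ℂ) (m : ℤ) (l : ℕ) (k : ℤ) (h : E n → ℂ)
    (θ : ℝ) (y : E n) :
    HasDerivAt (fun θ : ℝ => Fm n s m l k h θ y) (-(I * m / 2) * Fm n s m l k h θ y) θ := by
  simp_rw [Fm_eq_exp_mul_radialProfile]
  have hlin : HasDerivAt (fun θ : ℝ => -I * m * (θ : ℂ) / 2) (-(I * m / 2)) θ := by
    simpa [neg_div] using (((hasDerivAt_id θ).ofReal_comp).const_mul (-I * m)).div_const 2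
  exact (hlin.cexp.mul_const _).congr_deriv (by ring)

/-- `η⁻.F_{m,l,k} = -((-m+4l+2k+n)/4) F_{m-4,l,k}`, where
`(η⁻F)(θ,y) = ½ e^{2iθ}(-∑ⱼ yⱼ ∂F/∂yⱼ + i ∂F/∂θ - (n/2 - 2is‖y‖²) F)`. -/
theorem stmt13 (n k l : ℕ) (hn : 1 ≤ n) (m : ℤ) (s : ℂ)
    (h : E n → ℂ) (hh : IsHarmonicHomog k h) (θ : ℝ) (y : E n) :
    (1 / 2 : ℂ) * Complex.exp (2 * Complex.I * (θ : ℂ)) *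
        (-(∑ j : Fin n, ((y j : ℝ) : ℂ) * pd j (fun y' : E n => Fm n s m l k h θ y') y)
          + Complex.I * deriv (fun θ' : ℝ => Fm n s m l k h θ' y) θ
          - ((n : ℂ) / 2 - 2 * Complex.I * s * ((‖y‖ : ℝ) : ℂ) ^ 2) * Fm n s m l k h θ y)
      = -((-(m : ℂ) + 4 * (l : ℂ) + 2 * (k : ℂ) + (n : ℂ)) / 4) * Fm n s (m - 4) l k h θ y := by
  have hdiff := hh.differentiable
  obtain ⟨-, hhom, -⟩ := hh
  have hb : 0 < (2 * (l : ℂ) + ((k : ℤ) : ℂ) + n / 2).re := by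
    norm_num; positivity
  have ha : (((m - 4 : ℤ) : ℂ) + 4 * (l : ℂ) + 2 * ((k : ℤ) : ℂ) + n) / 4
      = (m + 4 * (l : ℂ) + 2 * ((k : ℤ) : ℂ) + n) / 4 - 1 := by
    push_cast; ring
  have hexp : exp (-I * ((m - 4 : ℤ) : ℂ) * θ / 2) = exp (2 * I * θ) * exp (-I * m * θ / 2) := by
    rw [← exp_add]; push_cast; ring_nf
  rw [(hasDerivAt_Fm_angle n s m l k h θ y).deriv]
  simp_rw [Fm_eq_exp_mul_radialProfile]
  rw [ha, hexp]
  set a : ℂ := (m + 4 * (l : ℂ) + 2 * ((k : ℤ) : ℂ) + n) / 4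
  set b : ℂ := 2 * (l : ℂ) + ((k : ℤ) : ℂ) + n / 2
  set z : ℂ := 2 * I * s * ((‖y‖ : ℝ) : ℂ) ^ 2
  have hM : DifferentiableAt ℂ (oneF1 a b) z := (hasDerivAt_oneF1 a hb z).differentiableAt
  rw [sum_coord_mul_pd_eq_of_hasDerivAt ((differentiableAt_radialProfile (hdiff y) hM).const_mul _)
    ((hasDerivAt_radialProfile_smul (hhom · y) hM.hasDerivAt).const_mul _)]
  simp only [radialProfile]
  linear_combination (exp (2 * I * θ) * exp (-I * m * θ / 2) * exp (-I * s * ‖y‖ ^ 2) *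
      ‖y‖ ^ (2 * l) * h y) * oneF1_contiguous a hb z
    - m / 4 * exp (2 * I * θ) * exp (-I * m * θ / 2) * exp (-I * s * ‖y‖ ^ 2) * ‖y‖ ^ (2 * l) * h y
      * oneF1 a b z * I_sq
end
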